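/- Under the adjoint-state setting, for any η ∈ ℝ^p and any symmetric positive semidefinite matrix M = LᵀL ∈ ℝ^{k×k}: if γ solves ∂_ρ h · γ = -∂_θ h · η and λ solves (∂_ρ h)ᵀ λ = LᵀL γ, then -(∂_θ h)ᵀ λ = Zᵀ Lᵀ L Z η, where Z = ∂_θ ρ is the implicit Jacobian. -/
import Mathlib


open Matrix

/-- correctness of the two-solve evaluation of the information-matrix
action.  With `A = ∂_ρ h` invertible, `B = ∂_θ h`, and the implicit Jacobian `Z`
satisfying `A Z = -B`: if `γ` solves `A γ = -B η` and `λ` solves `Aᵀ λ = Lᵀ L γ`,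
then `-Bᵀ λ = Zᵀ Lᵀ L Z η`. -/
theorem information_matrix_action_via_adjoint
    {k p l : ℕ} (A : Matrix (Fin k) (Fin k) ℝ) (B Z : Matrix (Fin k) (Fin p) ℝ)
    (L : Matrix (Fin l) (Fin k) ℝ)
    (hAinv : IsUnit A.det) (hZ : A * Z = -B)
    (η : Fin p → ℝ) (γ lam : Fin k → ℝ)
    (hγ : A *ᵥ γ = -(B *ᵥ η))
    (hlam : Aᵀ *ᵥ lam = (Lᵀ * L) *ᵥ γ) :
    -(Bᵀ *ᵥ lam) = (Zᵀ * Lᵀ * L * Z) *ᵥ η := by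
  have hγZ : γ = Z *ᵥ η := by
    have h1 : A *ᵥ γ = A *ᵥ (Z *ᵥ η) := by
      rw [hγ, Matrix.mulVec_mulVec, hZ, Matrix.neg_mulVec]
    have := congrArg (fun v => A⁻¹ *ᵥ v) h1
    simpa [Matrix.mulVec_mulVec, ← Matrix.mul_assoc, Matrix.nonsing_inv_mul A hAinv] using this
  have hB : Bᵀ = -(Zᵀ * Aᵀ) := by
    rw [← Matrix.transpose_mul, hZ, Matrix.transpose_neg, neg_neg]
  rw [hB, Matrix.neg_mulVec, neg_neg, ← Matrix.mulVec_mulVec, hlam,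
    Matrix.mulVec_mulVec, hγZ, Matrix.mulVec_mulVec]
  simp [Matrix.mul_assoc]
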